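/- Let E: [r₀, ∞) → [0, ∞) be a C² nondecreasing function with E(r₀) ≥ 0, E'(r₀) ≥ 0 and E''(r) ≥ ρ⁻²E(r) for all r > r₀. Then E(r) ≥ (1/2)E(r₀)·exp((r−r₀)/ρ) for all r ≥ r₀. -/

import Mathlib

/-! With `u = E' + E/ρ`, the hypothesis `E'' ≥ E/ρ²` reads `u' ≥ u/ρ`, so
`u(r) ≥ u(r₀) e^{(r-r₀)/ρ} ≥ (E(r₀)/ρ) e^{(r-r₀)/ρ}`. This in turn says that
`w = E - (E(r₀)/2) e^{(r-r₀)/ρ}` satisfies `w' ≥ -w/ρ`, whence `w(r) ≥ w(r₀) e^{-(r-r₀)/ρ} ≥ 0`.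
Both steps are the bound `f' ≥ k f ⇒ f(x) ≥ f(a) e^{k(x-a)}`, which holds because
`f e^{-k(x-a)}` is nondecreasing. -/

open Set Real

theorem le_mul_exp_of_mul_le_deriv {f f' : ℝ → ℝ} {a k : ℝ} (hf : ContinuousOn f (Ici a))
    (hf' : ∀ x ∈ Ioi a, HasDerivAt f (f' x) x) (hle : ∀ x ∈ Ioi a, k * f x ≤ f' x) :
    ∀ x ∈ Ici a, f a * exp (k * (x - a)) ≤ f x := by
  intro x hx
  set g : ℝ → ℝ := fun t => f t * exp (-k * (t - a))
  have hg : MonotoneOn g (Ici a) := by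
    refine monotoneOn_of_hasDerivWithinAt_nonneg (convex_Ici a)
      (hf.mul (by fun_prop)) (f' := fun t => (f' t - k * f t) * exp (-k * (t - a))) ?_ ?_
    · intro t ht
      rw [interior_Ici] at ht
      have hexp : HasDerivAt (fun t => exp (-k * (t - a))) (exp (-k * (t - a)) * -k) t := by
        simpa using (((hasDerivAt_id t).sub_const a).const_mul (-k)).exp
      exact (((hf' t ht).mul hexp).congr_deriv (by ring)).hasDerivWithinAt
    · intro t ht
      rw [interior_Ici] at ht
      exact mul_nonneg (sub_nonneg.mpr (hle t ht)) (exp_pos _).le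
  have hga : g a ≤ g x := hg self_mem_Ici hx hx
  calc f a * exp (k * (x - a)) = g a * exp (k * (x - a)) := by simp [g]
    _ ≤ g x * exp (k * (x - a)) := by gcongr
    _ = f x := by
      rw [mul_assoc, ← exp_add, neg_mul, neg_add_cancel, exp_zero, mul_one]

theorem hasDerivAt_derivWithin_Ici {f : ℝ → ℝ} {a x : ℝ} (hf : DifferentiableOn ℝ f (Ici a))
    (hx : a < x) : HasDerivAt f (derivWithin f (Ici a) x) x :=
  (hf x hx.le).hasDerivWithinAt.hasDerivAt (Ici_mem_nhds hx)

theorem div_mul_exp_le_deriv_add_div {E E' E'' : ℝ → ℝ} {a ρ : ℝ}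
    (hE : ContinuousOn E (Ici a)) (hE' : ContinuousOn E' (Ici a))
    (hE_deriv : ∀ x ∈ Ioi a, HasDerivAt E (E' x) x)
    (hE'_deriv : ∀ x ∈ Ioi a, HasDerivAt E' (E'' x) x)
    (hE'' : ∀ x ∈ Ioi a, (ρ ^ 2)⁻¹ * E x ≤ E'' x) (hE'a : 0 ≤ E' a) :
    ∀ x ∈ Ici a, E a / ρ * exp ((x - a) / ρ) ≤ E' x + E x / ρ := by
  intro x hx
  have hu := le_mul_exp_of_mul_le_deriv (f := fun t => E' t + E t / ρ) (k := ρ⁻¹)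
    (hE'.add (hE.div_const ρ))
    (fun t ht => (hE'_deriv t ht).add ((hE_deriv t ht).div_const ρ))
    (fun t ht => by linear_combination hE'' t ht) x hx
  calc E a / ρ * exp ((x - a) / ρ) ≤ (E' a + E a / ρ) * exp (ρ⁻¹ * (x - a)) := by
        rw [div_eq_inv_mul (x - a)]; gcongr; linarith
    _ ≤ E' x + E x / ρ := hu

theorem half_mul_exp_le_of_div_mul_exp_le_deriv_add_div {E E' : ℝ → ℝ} {a ρ : ℝ}
    (hE : ContinuousOn E (Ici a)) (hE_deriv : ∀ x ∈ Ioi a, HasDerivAt E (E' x) x)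
    (hgrowth : ∀ x ∈ Ioi a, E a / ρ * exp ((x - a) / ρ) ≤ E' x + E x / ρ) (hEa : 0 ≤ E a) :
    ∀ x ∈ Ici a, E a / 2 * exp ((x - a) / ρ) ≤ E x := by
  intro x hx
  have hw := le_mul_exp_of_mul_le_deriv
    (f := fun t => E t - E a / 2 * exp ((t - a) / ρ)) (k := -ρ⁻¹)
    (hE.sub (by fun_prop))
    (fun t ht => (hE_deriv t ht).sub
      (((((hasDerivAt_id' t).sub_const a).div_const ρ).exp).const_mul (E a / 2)))
    (fun t ht => by linear_combination hgrowth t ht) x hx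
  simp only [sub_self, zero_div, exp_zero, mul_one] at hw
  have hdecay : 0 ≤ (E a - E a / 2) * exp (-ρ⁻¹ * (x - a)) := mul_nonneg (by linarith) (exp_pos _).le
  linarith

theorem energy_comparison_general (ρ r₀ : ℝ) (E : ℝ → ℝ)
    (hC2 : ContDiffOn ℝ 2 E (Set.Ici r₀))
    (hnonneg : ∀ r ∈ Set.Ici r₀, 0 ≤ E r)
    (hE'0 : 0 ≤ derivWithin E (Set.Ici r₀) r₀)
    (hE'' : ∀ r, r₀ < r →
      (ρ ^ 2)⁻¹ * E r ≤ derivWithin (derivWithin E (Set.Ici r₀)) (Set.Ici r₀) r) :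
    ∀ r ∈ Set.Ici r₀, (1 / 2) * E r₀ * Real.exp ((r - r₀) / ρ) ≤ E r := by
  have hE : DifferentiableOn ℝ E (Ici r₀) := hC2.differentiableOn two_ne_zero
  have hE' : DifferentiableOn ℝ (derivWithin E (Ici r₀)) (Ici r₀) :=
    (hC2.derivWithin (uniqueDiffOn_Ici r₀) le_rfl).differentiableOn one_ne_zero
  have hgrowth := div_mul_exp_le_deriv_add_div hE.continuousOn hE'.continuousOn
    (fun x hx => hasDerivAt_derivWithin_Ici hE hx) (fun x hx => hasDerivAt_derivWithin_Ici hE' hx)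
    hE'' hE'0
  intro r hr
  have h := half_mul_exp_le_of_div_mul_exp_le_deriv_add_div hE.continuousOn
    (fun x hx => hasDerivAt_derivWithin_Ici hE hx) (fun x hx => hgrowth x (mem_Ici.mpr hx.le))
    (hnonneg r₀ self_mem_Ici) r hr
  linarith

/-- Differential comparison lemma: if `E : [r₀,∞) → [0,∞)` is `C²`,
nondecreasing, with `E'(r₀) ≥ 0` and `E'' ≥ ρ⁻²E`, then
`E(r) ≥ (1/2)E(r₀) exp((r−r₀)/ρ)` for all `r ≥ r₀`. -/
theorem energy_comparison (ρ r₀ : ℝ) (hρ : 0 < ρ) (E : ℝ → ℝ)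
    (hC2 : ContDiffOn ℝ 2 E (Set.Ici r₀))
    (hnonneg : ∀ r ∈ Set.Ici r₀, 0 ≤ E r)
    (hmono : MonotoneOn E (Set.Ici r₀))
    (hE'0 : 0 ≤ derivWithin E (Set.Ici r₀) r₀)
    (hE'' : ∀ r, r₀ < r →
      (ρ ^ 2)⁻¹ * E r ≤ derivWithin (derivWithin E (Set.Ici r₀)) (Set.Ici r₀) r) :
    ∀ r ∈ Set.Ici r₀, (1 / 2) * E r₀ * Real.exp ((r - r₀) / ρ) ≤ E r :=
  energy_comparison_general ρ r₀ E hC2 hnonneg hE'0 hE''
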